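/- arXiv:2411.11943 — 5 statements merged into one kernel-verified Lean document; each statement's English description precedes it below -/
import Mathlib

section
/- (Proposition 2, per-step bound) For the PIE iterates x, for every n ≥ 1, ‖x n − x (n−1)‖ ≤ (√α₀)^n · ((1/√α₀ − 1)·C₁ + λ·C₂), i.e. ‖x n − x (n−1)‖ ≤ (√α₀)^n · K. -/
/-- The PIE iterates, with `r = √α₀` and `c = λ`. -/
def pieIterate {R V : Type*} [CommRing R] [AddCommGroup V] [Module R V]
    (r c : R) (x₀ : V) (e : ℕ → V) (N : ℕ) : V :=
  r ^ N • x₀ + c • ∑ i ∈ Finset.Icc 1 N, r ^ i • e i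

theorem pieIterate_succ_sub {R V : Type*} [CommRing R] [AddCommGroup V] [Module R V]
    (r c : R) (x₀ : V) (e : ℕ → V) (m : ℕ) :
    pieIterate r c x₀ e (m + 1) - pieIterate r c x₀ e m
      = (r ^ (m + 1) - r ^ m) • x₀ + (c * r ^ (m + 1)) • e (m + 1) := by
  rw [pieIterate, pieIterate, Finset.sum_Icc_succ_top (by omega), smul_add]
  module

theorem abs_pow_succ_sub_pow_of_le_one {r : ℝ} (hr0 : 0 ≤ r) (hr1 : r ≤ 1) (m : ℕ) :
    |r ^ (m + 1) - r ^ m| = r ^ m * (1 - r) := by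
  have hle : r ^ (m + 1) ≤ r ^ m := pow_le_pow_of_le_one hr0 hr1 m.le_succ
  rw [abs_of_nonpos (sub_nonpos.mpr hle), pow_succ]
  ring

theorem norm_pieIterate_succ_sub_le {V : Type*} [NormedAddCommGroup V] [NormedSpace ℝ V]
    {r c C₁ C₂ : ℝ} {x₀ : V} {e : ℕ → V} {m : ℕ} (hr0 : 0 < r) (hr1 : r ≤ 1) (hc : 0 ≤ c)
    (hx₀ : ‖x₀‖ ≤ C₁) (he : ‖e (m + 1)‖ ≤ C₂) :
    ‖pieIterate r c x₀ e (m + 1) - pieIterate r c x₀ e m‖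
      ≤ r ^ (m + 1) * ((1 / r - 1) * C₁ + c * C₂) := by
  have hx₀_term : ‖(r ^ (m + 1) - r ^ m) • x₀‖ ≤ r ^ m * (1 - r) * C₁ := by
    rw [norm_smul, Real.norm_eq_abs, abs_pow_succ_sub_pow_of_le_one hr0.le hr1]
    gcongr
  have he_term : ‖(c * r ^ (m + 1)) • e (m + 1)‖ ≤ c * r ^ (m + 1) * C₂ := by
    rw [norm_smul, Real.norm_of_nonneg (by positivity)]
    gcongr
  calc ‖pieIterate r c x₀ e (m + 1) - pieIterate r c x₀ e m‖
      ≤ r ^ m * (1 - r) * C₁ + c * r ^ (m + 1) * C₂ := by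
        rw [pieIterate_succ_sub]
        exact (norm_add_le _ _).trans (add_le_add hx₀_term he_term)
    _ = r ^ (m + 1) * ((1 / r - 1) * C₁ + c * C₂) := by
        field_simp
        ring

open Finset in
theorem pie_step_norm_bound_general {V : Type*} [NormedAddCommGroup V] [NormedSpace ℝ V]
    (α₀ lam : ℝ) (hα₀ : 0 < α₀) (hα₀' : α₀ < 1) (hlam : 0 ≤ lam)
    (x₀ : V) (e : ℕ → V) (x : ℕ → V)
    (hx : ∀ N : ℕ, x N = (Real.sqrt α₀) ^ N • x₀
        + lam • ∑ i ∈ Finset.Icc 1 N, (Real.sqrt α₀) ^ i • e i)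
    (C₁ C₂ : ℝ)
    (hx₀ : ‖x₀‖ ≤ C₁) (he : ∀ n : ℕ, 1 ≤ n → ‖e n‖ ≤ C₂)
    (K : ℝ) (hK : K = (1 / Real.sqrt α₀ - 1) * C₁ + lam * C₂)
    (n : ℕ) (hn : 1 ≤ n) :
    ‖x n - x (n - 1)‖ ≤ (Real.sqrt α₀) ^ n * K := by
  obtain ⟨m, rfl⟩ := Nat.exists_eq_add_of_le' hn
  obtain rfl : x = pieIterate (Real.sqrt α₀) lam x₀ e := funext hx
  rw [hK, Nat.add_sub_cancel]
  exact norm_pieIterate_succ_sub_le (Real.sqrt_pos.mpr hα₀) (Real.sqrt_le_one.mpr hα₀'.le)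
    hlam hx₀ (he (m + 1) m.succ_pos)

open Finset in
/-- Proposition 2, per-step bound for the PIE iterates. -/
theorem pie_step_norm_bound {V : Type*} [NormedAddCommGroup V] [NormedSpace ℝ V]
    (α₀ lam : ℝ) (hα₀ : 0 < α₀) (hα₀' : α₀ < 1) (hlam : 0 ≤ lam)
    (x₀ : V) (e : ℕ → V) (x : ℕ → V)
    (hx : ∀ N : ℕ, x N = (Real.sqrt α₀) ^ N • x₀
        + lam • ∑ i ∈ Finset.Icc 1 N, (Real.sqrt α₀) ^ i • e i)
    (C₁ C₂ : ℝ) (hC₁ : 0 ≤ C₁) (hC₂ : 0 ≤ C₂)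
    (hx₀ : ‖x₀‖ ≤ C₁) (he : ∀ n : ℕ, 1 ≤ n → ‖e n‖ ≤ C₂)
    (K : ℝ) (hK : K = (1 / Real.sqrt α₀ - 1) * C₁ + lam * C₂)
    (n : ℕ) (hn : 1 ≤ n) :
    ‖x n - x (n - 1)‖ ≤ (Real.sqrt α₀) ^ n * K :=
  pie_step_norm_bound_general α₀ lam hα₀ hα₀' hlam x₀ e x hx C₁ C₂ hx₀ he K hK n hn
end

section
/- (Proposition 2) For the PIE iterates x, assume additionally K > 0 where K := (1/√α₀ − 1)·C₁ + λ·C₂. Then for every δ > 0 and every natural number n ≥ 1 with (n : ℝ) > (2 / log α₀) · (log δ − log K), one has ‖x n − x (n−1)‖ < δ. -/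
/-!
Writing `s = √α₀`, the increment `x n - x (n-1)` is `(s^n - s^(n-1)) • x₀ + (λ s^n) • e n`, whose norm
is at most `s^n ((1/s - 1) C₁ + λ C₂) = s^n K`. Since `log s = (log α₀)/2 < 0`, the threshold on `n` is
exactly the condition `n log s < log δ - log K`, i.e. `s^n K < δ`.
-/

open Finset

theorem geometric_iterate_succ_sub {R M : Type*} [CommRing R] [AddCommGroup M] [Module R M]
    (s lam : R) (x₀ : M) (e : ℕ → M) (m : ℕ) :
    (s ^ (m + 1) • x₀ + lam • ∑ i ∈ Icc 1 (m + 1), s ^ i • e i)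
      - (s ^ m • x₀ + lam • ∑ i ∈ Icc 1 m, s ^ i • e i)
      = (s ^ (m + 1) - s ^ m) • x₀ + (lam * s ^ (m + 1)) • e (m + 1) := by
  rw [sum_Icc_succ_top (by omega), sub_smul, smul_add, mul_smul]
  abel

theorem norm_geometric_step_le {V : Type*} [NormedAddCommGroup V] [NormedSpace ℝ V]
    {s lam C₁ C₂ : ℝ} (hs0 : 0 < s) (hs1 : s ≤ 1) (hlam : 0 ≤ lam)
    {x₀ y : V} (hx₀ : ‖x₀‖ ≤ C₁) (hy : ‖y‖ ≤ C₂) (m : ℕ) :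
    ‖(s ^ (m + 1) - s ^ m) • x₀ + (lam * s ^ (m + 1)) • y‖
      ≤ s ^ (m + 1) * ((1 / s - 1) * C₁ + lam * C₂) := by
  have hdecay : 0 ≤ s ^ m - s ^ (m + 1) := sub_nonneg.mpr (pow_le_pow_of_le_one hs0.le hs1 m.le_succ)
  have hcoeff : s ^ m - s ^ (m + 1) = s ^ (m + 1) * (1 / s - 1) := by
    field_simp
    ring
  calc ‖(s ^ (m + 1) - s ^ m) • x₀ + (lam * s ^ (m + 1)) • y‖
      ≤ |s ^ (m + 1) - s ^ m| * ‖x₀‖ + |lam * s ^ (m + 1)| * ‖y‖ := by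
        simpa only [norm_smul, Real.norm_eq_abs] using
          norm_add_le ((s ^ (m + 1) - s ^ m) • x₀) ((lam * s ^ (m + 1)) • y)
    _ = (s ^ m - s ^ (m + 1)) * ‖x₀‖ + (lam * s ^ (m + 1)) * ‖y‖ := by
        rw [abs_sub_comm, abs_of_nonneg hdecay, abs_of_nonneg (by positivity)]
    _ ≤ (s ^ m - s ^ (m + 1)) * C₁ + (lam * s ^ (m + 1)) * C₂ := by gcongr
    _ = s ^ (m + 1) * ((1 / s - 1) * C₁ + lam * C₂) := by rw [hcoeff]; ring

theorem pow_mul_lt_of_div_log_lt {r K δ : ℝ} (hr0 : 0 < r) (hr1 : r < 1) (hK : 0 < K) (hδ : 0 < δ)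
    {n : ℕ} (hn : (Real.log δ - Real.log K) / Real.log r < n) :
    r ^ n * K < δ := by
  rw [div_lt_iff_of_neg (Real.log_neg hr0 hr1)] at hn
  rw [← Real.log_lt_log_iff (by positivity) hδ, Real.log_mul (by positivity) hK.ne', Real.log_pow]
  linarith

open Finset in
theorem pie_prop2_general {V : Type*} [NormedAddCommGroup V] [NormedSpace ℝ V]
    (α₀ lam : ℝ) (hα₀ : 0 < α₀) (hα₀' : α₀ < 1) (hlam : 0 ≤ lam)
    (x₀ : V) (e : ℕ → V) (x : ℕ → V)
    (hx : ∀ N : ℕ, x N = (Real.sqrt α₀) ^ N • x₀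
        + lam • ∑ i ∈ Finset.Icc 1 N, (Real.sqrt α₀) ^ i • e i)
    (C₁ C₂ : ℝ)
    (hx₀ : ‖x₀‖ ≤ C₁) (he : ∀ n : ℕ, 1 ≤ n → ‖e n‖ ≤ C₂)
    (K : ℝ) (hK : K = (1 / Real.sqrt α₀ - 1) * C₁ + lam * C₂) (hKpos : 0 < K) :
    ∀ δ : ℝ, 0 < δ → ∀ n : ℕ, 1 ≤ n →
      (n : ℝ) > 2 / Real.log α₀ * (Real.log δ - Real.log K) →
      ‖x n - x (n - 1)‖ < δ := by
  intro δ hδ n hn hthreshold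
  obtain ⟨m, rfl⟩ : ∃ m, n = m + 1 := ⟨n - 1, by omega⟩
  have hs0 : 0 < Real.sqrt α₀ := Real.sqrt_pos.mpr hα₀
  have hs1 : Real.sqrt α₀ < 1 := (Real.sqrt_lt' one_pos).mpr (by simpa using hα₀')
  have hlog : (Real.log δ - Real.log K) / Real.log (Real.sqrt α₀) < ((m + 1 : ℕ) : ℝ) := by
    rw [Real.log_sqrt hα₀.le]
    calc _ = 2 / Real.log α₀ * (Real.log δ - Real.log K) := by ring
      _ < _ := hthreshold
  rw [Nat.add_sub_cancel, hx, hx, geometric_iterate_succ_sub]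
  calc _ ≤ Real.sqrt α₀ ^ (m + 1) * K :=
        hK ▸ norm_geometric_step_le hs0 hs1.le hlam hx₀ (he (m + 1) (by omega)) m
    _ < δ := pow_mul_lt_of_div_log_lt hs0 hs1 hKpos hδ hlog

open Finset in
/-- Proposition 2: small per-step change of the PIE iterates beyond the threshold. -/
theorem pie_prop2 {V : Type*} [NormedAddCommGroup V] [NormedSpace ℝ V]
    (α₀ lam : ℝ) (hα₀ : 0 < α₀) (hα₀' : α₀ < 1) (hlam : 0 ≤ lam)
    (x₀ : V) (e : ℕ → V) (x : ℕ → V)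
    (hx : ∀ N : ℕ, x N = (Real.sqrt α₀) ^ N • x₀
        + lam • ∑ i ∈ Finset.Icc 1 N, (Real.sqrt α₀) ^ i • e i)
    (C₁ C₂ : ℝ) (hC₁ : 0 ≤ C₁) (hC₂ : 0 ≤ C₂)
    (hx₀ : ‖x₀‖ ≤ C₁) (he : ∀ n : ℕ, 1 ≤ n → ‖e n‖ ≤ C₂)
    (K : ℝ) (hK : K = (1 / Real.sqrt α₀ - 1) * C₁ + lam * C₂) (hKpos : 0 < K) :
    ∀ δ : ℝ, 0 < δ → ∀ n : ℕ, 1 ≤ n →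
      (n : ℝ) > 2 / Real.log α₀ * (Real.log δ - Real.log K) →
      ‖x n - x (n - 1)‖ < δ :=
  pie_prop2_general α₀ lam hα₀ hα₀' hlam x₀ e x hx C₁ C₂ hx₀ he K hK hKpos
end

section
/- (Proposition 3, finite-horizon bound) For the PIE iterates x, for every N ∈ ℕ, ‖x N − x 0‖ ≤ ((1 − (√α₀)^N)/(1 − √α₀)) · K. -/
/-! Write `s = √α₀` and `G = ∑_{i<N} s^i = (1 - s^N)/(1 - s)`. Then
`x N - x 0 = (s^N - 1) • x₀ + λ • ∑_{i=1}^N s^i • e i`. The first term has norm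
`(1 - s)·G·‖x₀‖ ≤ G·(1/s - 1)·C₁` because `1 - s ≤ 1/s - 1`; the second has norm at most
`λ·G·C₂` because each weight `s^(i+1)` is at most `s^i`. -/

open Finset

lemma one_sub_le_inv_sub_one {s : ℝ} (hs : 0 < s) : 1 - s ≤ s⁻¹ - 1 := by
  have h : s⁻¹ - 1 - (1 - s) = (1 - s) ^ 2 / s := by field_simp
  linarith [div_nonneg (sq_nonneg (1 - s)) hs.le]

lemma sum_Icc_one_eq_sum_range_succ {M : Type*} [AddCommMonoid M] (f : ℕ → M) (N : ℕ) :
    ∑ i ∈ Icc 1 N, f i = ∑ i ∈ range N, f (i + 1) := by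
  rw [range_eq_Ico, sum_Ico_add' f 0 N 1]
  rfl

section

variable {V : Type*} [NormedAddCommGroup V] [NormedSpace ℝ V]

lemma norm_pow_sub_one_smul_le {s C : ℝ} (hs₀ : 0 < s) (hs₁ : s ≤ 1) {v : V} (hv : ‖v‖ ≤ C)
    (N : ℕ) : ‖(s ^ N - 1) • v‖ ≤ (∑ i ∈ range N, s ^ i) * ((s⁻¹ - 1) * C) := by
  have hG : 0 ≤ ∑ i ∈ range N, s ^ i := sum_nonneg fun i _ ↦ pow_nonneg hs₀.le i
  have hsN : s ^ N ≤ 1 := pow_le_one₀ hs₀.le hs₁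
  rw [norm_smul, Real.norm_eq_abs, abs_of_nonpos (by linarith), neg_sub, ← mul_neg_geom_sum,
    mul_comm (1 - s), mul_assoc]
  refine mul_le_mul_of_nonneg_left ?_ hG
  calc (1 - s) * ‖v‖ ≤ (s⁻¹ - 1) * ‖v‖ :=
        mul_le_mul_of_nonneg_right (one_sub_le_inv_sub_one hs₀) (norm_nonneg v)
    _ ≤ (s⁻¹ - 1) * C :=
        mul_le_mul_of_nonneg_left hv (by linarith [one_sub_le_inv_sub_one hs₀])

lemma norm_sum_Icc_pow_smul_le {s C : ℝ} (hs₀ : 0 ≤ s) (hs₁ : s ≤ 1) {e : ℕ → V} {N : ℕ}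
    (he : ∀ n ∈ Icc 1 N, ‖e n‖ ≤ C) :
    ‖∑ i ∈ Icc 1 N, s ^ i • e i‖ ≤ (∑ i ∈ range N, s ^ i) * C := by
  rw [sum_Icc_one_eq_sum_range_succ, sum_mul]
  refine (norm_sum_le _ _).trans (sum_le_sum fun i hi ↦ ?_)
  have hi' : i + 1 ∈ Icc 1 N := mem_Icc.2 ⟨by omega, by simpa using hi⟩
  calc ‖s ^ (i + 1) • e (i + 1)‖ = s ^ (i + 1) * ‖e (i + 1)‖ := by
        rw [norm_smul, Real.norm_of_nonneg (pow_nonneg hs₀ _)]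
    _ ≤ s ^ i * ‖e (i + 1)‖ :=
        mul_le_mul_of_nonneg_right (pow_le_pow_of_le_one hs₀ hs₁ i.le_succ) (norm_nonneg _)
    _ ≤ s ^ i * C := mul_le_mul_of_nonneg_left (he _ hi') (pow_nonneg hs₀ i)

end

open Finset in
theorem pie_prop3_finite_general {V : Type*} [NormedAddCommGroup V] [NormedSpace ℝ V]
    (α₀ lam : ℝ) (hα₀ : 0 < α₀) (hα₀' : α₀ < 1) (hlam : 0 ≤ lam)
    (x₀ : V) (e : ℕ → V) (x : ℕ → V)
    (hx : ∀ N : ℕ, x N = (Real.sqrt α₀) ^ N • x₀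
        + lam • ∑ i ∈ Finset.Icc 1 N, (Real.sqrt α₀) ^ i • e i)
    (C₁ C₂ : ℝ)
    (hx₀ : ‖x₀‖ ≤ C₁) (he : ∀ n : ℕ, 1 ≤ n → ‖e n‖ ≤ C₂)
    (K : ℝ) (hK : K = (1 / Real.sqrt α₀ - 1) * C₁ + lam * C₂)
    (N : ℕ) :
    ‖x N - x 0‖ ≤ (1 - (Real.sqrt α₀) ^ N) / (1 - Real.sqrt α₀) * K := by
  set s := Real.sqrt α₀
  have hs₀ : 0 < s := Real.sqrt_pos.2 hα₀
  have hs₁ : s < 1 := (Real.sqrt_lt' one_pos).2 (by linarith)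
  have hG : (1 - s ^ N) / (1 - s) = ∑ i ∈ range N, s ^ i := by
    rw [← mul_neg_geom_sum, mul_div_cancel_left₀ _ (sub_ne_zero.2 hs₁.ne')]
  have hdiff : x N - x 0 = (s ^ N - 1) • x₀ + lam • ∑ i ∈ Icc 1 N, s ^ i • e i := by
    simp only [hx, pow_zero, one_smul, Icc_eq_empty_of_lt zero_lt_one, sum_empty, smul_zero,
      add_zero, sub_smul]
    abel
  rw [hdiff, hG, hK, one_div, mul_add]
  refine (norm_add_le _ _).trans (add_le_add (norm_pow_sub_one_smul_le hs₀ hs₁.le hx₀ N) ?_)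
  rw [norm_smul, Real.norm_of_nonneg hlam, mul_left_comm]
  exact mul_le_mul_of_nonneg_left
    (norm_sum_Icc_pow_smul_le hs₀.le hs₁.le fun n hn ↦ he n (mem_Icc.1 hn).1) hlam

open Finset in
/-- Proposition 3, finite-horizon bound for the PIE iterates. -/
theorem pie_prop3_finite {V : Type*} [NormedAddCommGroup V] [NormedSpace ℝ V]
    (α₀ lam : ℝ) (hα₀ : 0 < α₀) (hα₀' : α₀ < 1) (hlam : 0 ≤ lam)
    (x₀ : V) (e : ℕ → V) (x : ℕ → V)
    (hx : ∀ N : ℕ, x N = (Real.sqrt α₀) ^ N • x₀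
        + lam • ∑ i ∈ Finset.Icc 1 N, (Real.sqrt α₀) ^ i • e i)
    (C₁ C₂ : ℝ) (hC₁ : 0 ≤ C₁) (hC₂ : 0 ≤ C₂)
    (hx₀ : ‖x₀‖ ≤ C₁) (he : ∀ n : ℕ, 1 ≤ n → ‖e n‖ ≤ C₂)
    (K : ℝ) (hK : K = (1 / Real.sqrt α₀ - 1) * C₁ + lam * C₂)
    (N : ℕ) :
    ‖x N - x 0‖ ≤ (1 - (Real.sqrt α₀) ^ N) / (1 - Real.sqrt α₀) * K :=
  pie_prop3_finite_general α₀ lam hα₀ hα₀' hlam x₀ e x hx C₁ C₂ hx₀ he K hK N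
end

section
/- (Proposition 3, uniform bound) For the PIE iterates x, for every N ∈ ℕ, ‖x N − x 0‖ ≤ κ, where κ := K / (1 − √α₀) = (1/(1 − √α₀)) · ((1/√α₀ − 1)·C₁ + λ·C₂). In particular, the total modification made by PIE to any input is bounded by the constant κ. -/
/-!
With `a = √α₀ ∈ (0, 1)`, `x N - x 0 = (a ^ N - 1) • x₀ + λ • ∑ i ∈ [1, N], a ^ i • e i`.
The first term has norm at most `‖x₀‖ ≤ C₁ ≤ C₁ / a`, the second at most `λ C₂ / (1 - a)` by
comparison with the geometric series, and `κ` is exactly `C₁ / a + λ C₂ / (1 - a)`.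
-/

open Finset

section GeometricWeights

variable {a : ℝ}

theorem sum_pow_le_inv_one_sub (ha₀ : 0 ≤ a) (ha₁ : a < 1) (s : Finset ℕ) :
    ∑ i ∈ s, a ^ i ≤ (1 - a)⁻¹ := by
  rw [← tsum_geometric_of_lt_one ha₀ ha₁]
  exact (summable_geometric_of_lt_one ha₀ ha₁).sum_le_tsum s fun i _ => pow_nonneg ha₀ i

variable {V : Type*} [NormedAddCommGroup V] [NormedSpace ℝ V]

theorem norm_sum_pow_smul_le (ha₀ : 0 ≤ a) (ha₁ : a < 1) {s : Finset ℕ} {e : ℕ → V}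
    {C : ℝ} (hC : 0 ≤ C) (he : ∀ i ∈ s, ‖e i‖ ≤ C) :
    ‖∑ i ∈ s, a ^ i • e i‖ ≤ C / (1 - a) :=
  calc ‖∑ i ∈ s, a ^ i • e i‖
      ≤ ∑ i ∈ s, a ^ i * C := by
        refine (norm_sum_le _ _).trans (sum_le_sum fun i hi => ?_)
        rw [norm_smul, Real.norm_of_nonneg (pow_nonneg ha₀ i)]
        exact mul_le_mul_of_nonneg_left (he i hi) (pow_nonneg ha₀ i)
    _ = (∑ i ∈ s, a ^ i) * C := (sum_mul _ _ _).symm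
    _ ≤ (1 - a)⁻¹ * C := mul_le_mul_of_nonneg_right (sum_pow_le_inv_one_sub ha₀ ha₁ s) hC
    _ = C / (1 - a) := inv_mul_eq_div _ _

theorem norm_pow_sub_one_smul_le_s7 (ha₀ : 0 ≤ a) (ha₁ : a ≤ 1) (n : ℕ) (v : V) :
    ‖(a ^ n - 1) • v‖ ≤ ‖v‖ := by
  have hp₀ : 0 ≤ a ^ n := pow_nonneg ha₀ n
  have hp₁ : a ^ n ≤ 1 := pow_le_one₀ ha₀ ha₁
  rw [norm_smul, Real.norm_of_nonpos (by linarith)]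
  exact mul_le_of_le_one_left (norm_nonneg v) (by linarith)

end GeometricWeights

open Finset in
theorem pie_prop3_uniform_general {V : Type*} [NormedAddCommGroup V] [NormedSpace ℝ V]
    (α₀ lam : ℝ) (hα₀ : 0 < α₀) (hα₀' : α₀ < 1) (hlam : 0 ≤ lam)
    (x₀ : V) (e : ℕ → V) (x : ℕ → V)
    (hx : ∀ N : ℕ, x N = (Real.sqrt α₀) ^ N • x₀
        + lam • ∑ i ∈ Finset.Icc 1 N, (Real.sqrt α₀) ^ i • e i)
    (C₁ C₂ : ℝ) (hC₂ : 0 ≤ C₂)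
    (hx₀ : ‖x₀‖ ≤ C₁) (he : ∀ n : ℕ, 1 ≤ n → ‖e n‖ ≤ C₂)
    (K : ℝ) (hK : K = (1 / Real.sqrt α₀ - 1) * C₁ + lam * C₂)
    (κ : ℝ) (hκ : κ = K / (1 - Real.sqrt α₀))
    (N : ℕ) :
    ‖x N - x 0‖ ≤ κ := by
  set a := Real.sqrt α₀
  have ha₀ : 0 < a := Real.sqrt_pos.mpr hα₀
  have ha₁ : a < 1 := (Real.sqrt_lt' one_pos).mpr (by simpa using hα₀')
  have hκ_eq : κ = C₁ / a + lam * (C₂ / (1 - a)) := by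
    rw [hκ, hK]
    field_simp [(sub_pos.mpr ha₁).ne']
  have hdiff : x N - x 0 = (a ^ N - 1) • x₀ + lam • ∑ i ∈ Icc 1 N, a ^ i • e i := by
    rw [hx N, hx 0, sub_smul, one_smul, pow_zero, one_smul, Icc_eq_empty_of_lt zero_lt_one,
      sum_empty, smul_zero, add_zero]
    abel
  have hsum : ‖∑ i ∈ Icc 1 N, a ^ i • e i‖ ≤ C₂ / (1 - a) :=
    norm_sum_pow_smul_le ha₀.le ha₁ hC₂ fun i hi => he i (mem_Icc.mp hi).1
  have hC₁ : C₁ ≤ C₁ / a := le_div_self ((norm_nonneg x₀).trans hx₀) ha₀ ha₁.le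
  rw [hdiff, hκ_eq]
  calc ‖(a ^ N - 1) • x₀ + lam • ∑ i ∈ Icc 1 N, a ^ i • e i‖
      ≤ ‖(a ^ N - 1) • x₀‖ + lam * ‖∑ i ∈ Icc 1 N, a ^ i • e i‖ :=
        (norm_add_le _ _).trans_eq (by rw [norm_smul lam, Real.norm_of_nonneg hlam])
    _ ≤ C₁ + lam * (C₂ / (1 - a)) :=
        add_le_add ((norm_pow_sub_one_smul_le_s7 ha₀.le ha₁.le N x₀).trans hx₀)
          (mul_le_mul_of_nonneg_left hsum hlam)
    _ ≤ C₁ / a + lam * (C₂ / (1 - a)) := by linarith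

open Finset in
/-- Proposition 3, uniform bound: the total modification made by PIE is bounded by κ. -/
theorem pie_prop3_uniform {V : Type*} [NormedAddCommGroup V] [NormedSpace ℝ V]
    (α₀ lam : ℝ) (hα₀ : 0 < α₀) (hα₀' : α₀ < 1) (hlam : 0 ≤ lam)
    (x₀ : V) (e : ℕ → V) (x : ℕ → V)
    (hx : ∀ N : ℕ, x N = (Real.sqrt α₀) ^ N • x₀
        + lam • ∑ i ∈ Finset.Icc 1 N, (Real.sqrt α₀) ^ i • e i)
    (C₁ C₂ : ℝ) (hC₁ : 0 ≤ C₁) (hC₂ : 0 ≤ C₂)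
    (hx₀ : ‖x₀‖ ≤ C₁) (he : ∀ n : ℕ, 1 ≤ n → ‖e n‖ ≤ C₂)
    (K : ℝ) (hK : K = (1 / Real.sqrt α₀ - 1) * C₁ + lam * C₂)
    (κ : ℝ) (hκ : κ = K / (1 - Real.sqrt α₀))
    (N : ℕ) :
    ‖x N - x 0‖ ≤ κ :=
  pie_prop3_uniform_general α₀ lam hα₀ hα₀' hlam x₀ e x hx C₁ C₂ hC₂ hx₀ he K hK κ hκ N
end

section
/- If the PIE iterates x converge to a limit y ∈ V, then ‖y − x 0‖ ≤ κ, where κ := K / (1 − √α₀) = (1/(1 − √α₀)) · ((1/√α₀ − 1)·C₁ + λ·C₂). -/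
open Finset Filter in
/-- The limit of the PIE iterates stays within distance κ of the input. -/
theorem pie_limit_bound {V : Type*} [NormedAddCommGroup V] [NormedSpace ℝ V]
    (α₀ lam : ℝ) (hα₀ : 0 < α₀) (hα₀' : α₀ < 1) (hlam : 0 ≤ lam)
    (x₀ : V) (e : ℕ → V) (x : ℕ → V)
    (hx : ∀ N : ℕ, x N = (Real.sqrt α₀) ^ N • x₀
        + lam • ∑ i ∈ Finset.Icc 1 N, (Real.sqrt α₀) ^ i • e i)
    (C₁ C₂ : ℝ) (hC₁ : 0 ≤ C₁) (hC₂ : 0 ≤ C₂)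
    (hx₀ : ‖x₀‖ ≤ C₁) (he : ∀ n : ℕ, 1 ≤ n → ‖e n‖ ≤ C₂)
    (K : ℝ) (hK : K = (1 / Real.sqrt α₀ - 1) * C₁ + lam * C₂)
    (κ : ℝ) (hκ : κ = K / (1 - Real.sqrt α₀))
    (y : V) (hy : Filter.Tendsto x Filter.atTop (nhds y)) :
    ‖y - x 0‖ ≤ κ := by
  set s := Real.sqrt α₀ with hs
  have hs0 : 0 < s := Real.sqrt_pos.mpr hα₀
  have hs1 : s < 1 := by
    rw [hs, show (1:ℝ) = Real.sqrt 1 by simp]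
    exact Real.sqrt_lt_sqrt hα₀.le hα₀'
  have hx0 : x 0 = x₀ := by simp [hx 0]
  have hbound : ∀ N : ℕ, ‖x N - x 0‖ ≤ κ := by
    intro N
    have hsum : ‖∑ i ∈ Finset.Icc 1 N, s ^ i • e i‖ ≤ C₂ / (1 - s) := by
      calc ‖∑ i ∈ Finset.Icc 1 N, s ^ i • e i‖
          ≤ ∑ i ∈ Finset.Icc 1 N, ‖s ^ i • e i‖ := norm_sum_le _ _
        _ ≤ ∑ i ∈ Finset.Icc 1 N, s ^ i * C₂ := by
            apply Finset.sum_le_sum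
            intro i hi
            rw [norm_smul, Real.norm_eq_abs, abs_of_nonneg (pow_nonneg hs0.le i)]
            exact mul_le_mul_of_nonneg_left (he i (Finset.mem_Icc.mp hi).1)
              (pow_nonneg hs0.le i)
        _ ≤ ∑ i ∈ Finset.range (N + 1), s ^ i * C₂ := by
            apply Finset.sum_le_sum_of_subset_of_nonneg
            · intro i hi
              rw [Finset.mem_range]
              exact Nat.lt_succ_of_le (Finset.mem_Icc.mp hi).2
            · intro i _ _
              positivity
        _ = (∑ i ∈ Finset.range (N + 1), s ^ i) * C₂ := by
            rw [Finset.sum_mul]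
        _ ≤ (1 / (1 - s)) * C₂ := by
            apply mul_le_mul_of_nonneg_right _ hC₂
            rw [le_div_iff₀ (by linarith : (0:ℝ) < 1 - s)]
            nlinarith [geom_sum_mul s (N + 1), pow_nonneg hs0.le (N + 1)]
        _ = C₂ / (1 - s) := by ring
    have hdiff : x N - x 0 = (s ^ N - 1) • x₀ + lam • ∑ i ∈ Finset.Icc 1 N, s ^ i • e i := by
      rw [hx N, hx0]; module
    have h1 : ‖x N - x 0‖ ≤ C₁ + lam * (C₂ / (1 - s)) := by
      rw [hdiff]
      calc ‖(s ^ N - 1) • x₀ + lam • ∑ i ∈ Finset.Icc 1 N, s ^ i • e i‖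
          ≤ ‖(s ^ N - 1) • x₀‖ + ‖lam • ∑ i ∈ Finset.Icc 1 N, s ^ i • e i‖ :=
            norm_add_le _ _
        _ ≤ |s ^ N - 1| * C₁ + lam * (C₂ / (1 - s)) := by
            rw [norm_smul, norm_smul, Real.norm_eq_abs, Real.norm_eq_abs,
              abs_of_nonneg hlam]
            exact add_le_add
              (mul_le_mul_of_nonneg_left hx₀ (abs_nonneg _))
              (mul_le_mul_of_nonneg_left hsum hlam)
        _ ≤ C₁ + lam * (C₂ / (1 - s)) := by
            have hpow : s ^ N ≤ 1 := pow_le_one₀ hs0.le hs1.le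
            have hpow' : 0 ≤ s ^ N := pow_nonneg hs0.le N
            have : |s ^ N - 1| ≤ 1 := by rw [abs_le]; constructor <;> linarith
            nlinarith [mul_le_mul_of_nonneg_right this hC₁]
    have h2 : C₁ + lam * (C₂ / (1 - s)) ≤ κ := by
      rw [hκ, hK]
      rw [le_div_iff₀ (by linarith : (0:ℝ) < 1 - s)]
      have e1 : (C₁ + lam * (C₂ / (1 - s))) * (1 - s) = C₁ * (1 - s) + lam * C₂ := by
        rw [add_mul, mul_assoc, div_mul_cancel₀ _ (by linarith : (1:ℝ) - s ≠ 0)]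
      rw [e1]
      have hst : s * (1 / s) = 1 := by field_simp
      nlinarith [sq_nonneg (1 - s), mul_nonneg hC₁ (sq_nonneg (1 - s)),
        mul_pos hs0 hs0]
    linarith
  have hten : Tendsto (fun N => ‖x N - x 0‖) atTop (nhds ‖y - x 0‖) :=
    ((hy.sub_const (x 0)).norm)
  exact le_of_tendsto' hten hbound
end
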